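/- Let ψ be a species tree topology on X with |X| = n ≥ 2, let T_M be its matching gene tree, and let T be a gene tree on X that is a caterpillar and does not have the same set of clades as ψ. Then the number of coalescent histories for T relative to ψ is strictly less than the number of coalescent histories for T_M relative to ψ: |H_{ψ,T}| < |H_{ψ,T_M}|. -/

import Mathlib

/-!
Rooted binary trees with leaves labeled by elements of a finite label set.
Each node of a tree is identified with the subtree rooted at it; since leaf
labels are required to be distinct, this identification is faithful.
-/

inductive RBT (α : Type) where
  | leaf (x : α)
  | node (l r : RBT α)
deriving DecidableEq

namespace RBT

variable {α : Type} [DecidableEq α]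

/-- The list of leaf labels, left to right. -/
def leafList : RBT α → List α
  | leaf x => [x]
  | node l r => l.leafList ++ r.leafList

/-- The clade of a node: the set of labels of leaves descended from or equal to it. -/
def clade (t : RBT α) : Finset α := t.leafList.toFinset

/-- `t` is a rooted binary tree on the label set `X`: its leaf labels are
distinct and form exactly the set `X`. -/
def IsTreeOn (t : RBT α) (X : Finset α) : Prop :=
  t.leafList.Nodup ∧ t.clade = X

/-- All nodes of a tree, each identified with the subtree rooted at it. -/
def subtrees : RBT α → Finset (RBT α)
  | leaf x => {leaf x}
  | node l r => insert (node l r) (subtrees l ∪ subtrees r)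

/-- `Anc i j` means node `i` is ancestral to or equal to node `j`, i.e. `i ⪰ j`. -/
def Anc (i j : RBT α) : Prop := j ∈ i.subtrees

instance (i j : RBT α) : Decidable (Anc i j) :=
  inferInstanceAs (Decidable (j ∈ i.subtrees))

/-- Whether a node is internal (a non-leaf). -/
def isInternal : RBT α → Bool
  | leaf _ => false
  | node _ _ => true

/-- The internal nodes of a tree. -/
def internals (t : RBT α) : Finset (RBT α) :=
  t.subtrees.filter fun s => s.isInternal = true

/-- A coalescent history for a gene tree `T` relative to a species tree
topology `ψ`: a map `h : I_T → I_ψ` such that the clade of `j` is contained in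
the clade of `h j` for every internal node `j` of `T`, and `h i ⪰ h j` in `ψ`
whenever `i ⪰ j` in `T`. -/
def IsCoalHistory (ψ T : RBT α) (h : ↥T.internals → ↥ψ.internals) : Prop :=
  (∀ j : ↥T.internals, (j : RBT α).clade ⊆ ((h j : RBT α)).clade) ∧
  ∀ i j : ↥T.internals, Anc (i : RBT α) (j : RBT α) →
    Anc (h i : RBT α) ((h j : RBT α))

/-- The set `H_{ψ,T}` of coalescent histories for `T` relative to `ψ`. -/
def coalHistories (ψ T : RBT α) : Set (↥T.internals → ↥ψ.internals) :=
  {h | IsCoalHistory ψ T h}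

/-- The map `Φ_{ψ,T}`: from a coalescent history, record only the number of
coalescent events `|h⁻¹(i)|` occurring at each internal node `i` of `ψ`. -/
def Phi (ψ T : RBT α) (h : ↥T.internals → ↥ψ.internals) : ↥ψ.internals → ℕ :=
  fun i => (Finset.univ.filter fun j : ↥T.internals => h j = i).card

/-- A population history for `ψ`, where `n` is the number of taxa: a map
`y : I_ψ → ℕ` with total sum `n - 1` such that, for every internal node `i`,
the sum of `y` over internal nodes `j` with `i ⪰ j` is at most `ℓ_i - 1`. -/
def IsPopHistory (ψ : RBT α) (n : ℕ) (y : ↥ψ.internals → ℕ) : Prop :=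
  (∑ i : ↥ψ.internals, y i = n - 1) ∧
  ∀ i : ↥ψ.internals,
    (∑ j ∈ Finset.univ.filter
        (fun j : ↥ψ.internals => Anc (i : RBT α) (j : RBT α)), y j)
      ≤ (i : RBT α).clade.card - 1

/-- The set `Y_ψ` of population histories for `ψ` on `n` taxa. -/
def popHistories (ψ : RBT α) (n : ℕ) : Set (↥ψ.internals → ℕ) :=
  {y | IsPopHistory ψ n y}

/-- A caterpillar: a rooted binary tree whose internal nodes are totally
ordered by the ancestry relation. -/
def IsCaterpillar (T : RBT α) : Prop :=
  ∀ i ∈ T.internals, ∀ j ∈ T.internals, Anc i j ∨ Anc j i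

/-- The set of clades of a tree. -/
def cladeSet (t : RBT α) : Set (Finset α) :=
  {s | ∃ v ∈ t.subtrees, v.clade = s}


theorem mem_subtrees_self (t : RBT α) : t ∈ t.subtrees := by
  cases t <;> simp [subtrees]

theorem anc_refl (t : RBT α) : Anc t t := mem_subtrees_self t

theorem mem_subtrees_node {l r j : RBT α} :
    j ∈ (node l r).subtrees ↔ j = node l r ∨ j ∈ l.subtrees ∨ j ∈ r.subtrees := by
  simp [subtrees]

theorem subtrees_subset {i j : RBT α} (h : j ∈ i.subtrees) :
    j.subtrees ⊆ i.subtrees := by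
  induction i with
  | leaf x => simp [subtrees] at h; subst h; exact fun a ha => ha
  | node l r ihl ihr =>
    rcases mem_subtrees_node.mp h with h | h | h
    · subst h; exact fun a ha => ha
    · exact fun a ha => mem_subtrees_node.mpr (Or.inr (Or.inl (ihl h ha)))
    · exact fun a ha => mem_subtrees_node.mpr (Or.inr (Or.inr (ihr h ha)))

theorem anc_trans {i j k : RBT α} (h1 : Anc i j) (h2 : Anc j k) : Anc i k :=
  subtrees_subset h1 h2

theorem sizeOf_le_of_mem_subtrees {i j : RBT α} (h : j ∈ i.subtrees) :
    sizeOf j ≤ sizeOf i := by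
  induction i with
  | leaf x => simp [subtrees] at h; subst h; exact le_refl _
  | node l r ihl ihr =>
    rcases mem_subtrees_node.mp h with h | h | h
    · subst h; exact le_refl _
    · have := ihl h
      have : sizeOf j ≤ sizeOf l := this
      simp only [node.sizeOf_spec]; omega
    · have := ihr h
      simp only [node.sizeOf_spec]; omega

theorem sizeOf_lt_of_mem_subtrees_ne {i j : RBT α} (h : j ∈ i.subtrees) (hne : j ≠ i) :
    sizeOf j < sizeOf i := by
  cases i with
  | leaf x => simp [subtrees] at h; exact absurd h hne
  | node l r =>
    rcases mem_subtrees_node.mp h with h | h | h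
    · exact absurd h hne
    · have := sizeOf_le_of_mem_subtrees h
      simp only [node.sizeOf_spec]; omega
    · have := sizeOf_le_of_mem_subtrees h
      simp only [node.sizeOf_spec]; omega

theorem anc_antisymm {i j : RBT α} (h1 : Anc i j) (h2 : Anc j i) : i = j := by
  by_contra hne
  have a := sizeOf_lt_of_mem_subtrees_ne h1 (fun h => hne h.symm)
  have b := sizeOf_lt_of_mem_subtrees_ne h2 hne
  omega

theorem leafList_subset_of_mem_subtrees {i j : RBT α} (h : j ∈ i.subtrees) :
    j.leafList ⊆ i.leafList := by
  induction i with
  | leaf x => simp [subtrees] at h; subst h; exact fun a ha => ha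
  | node l r ihl ihr =>
    rcases mem_subtrees_node.mp h with h | h | h
    · subst h; exact fun a ha => ha
    · exact fun a ha => by simp [leafList]; exact Or.inl (ihl h ha)
    · exact fun a ha => by simp [leafList]; exact Or.inr (ihr h ha)

theorem clade_subset_of_anc {i j : RBT α} (h : Anc i j) : j.clade ⊆ i.clade := by
  intro a ha
  simp only [clade, List.mem_toFinset] at ha ⊢
  exact leafList_subset_of_mem_subtrees h ha

theorem leafList_ne_nil (t : RBT α) : t.leafList ≠ [] := by
  induction t with
  | leaf x => simp [leafList]
  | node l r ihl ihr => simp [leafList, ihl]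

theorem clade_nonempty (t : RBT α) : t.clade.Nonempty := by
  rcases List.exists_mem_of_ne_nil _ (leafList_ne_nil t) with ⟨a, ha⟩
  exact ⟨a, by simp [clade, ha]⟩

theorem mem_clade_iff_leaf_mem {t : RBT α} {x : α} :
    x ∈ t.clade ↔ leaf x ∈ t.subtrees := by
  induction t with
  | leaf y => simp [clade, leafList, subtrees, eq_comm]
  | node l r ihl ihr =>
    simp [clade, leafList, mem_subtrees_node, ← ihl, ← ihr, clade]

theorem nodup_left {l r : RBT α} (h : (node l r).leafList.Nodup) : l.leafList.Nodup :=
  (List.nodup_append.mp h).1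

theorem nodup_right {l r : RBT α} (h : (node l r).leafList.Nodup) : r.leafList.Nodup :=
  (List.nodup_append.mp h).2.1

theorem nodup_of_mem_subtrees {t v : RBT α} (hn : t.leafList.Nodup)
    (h : v ∈ t.subtrees) : v.leafList.Nodup := by
  induction t with
  | leaf x => simp [subtrees] at h; subst h; exact hn
  | node l r ihl ihr =>
    rcases mem_subtrees_node.mp h with h | h | h
    · subst h; exact hn
    · exact ihl (nodup_left hn) h
    · exact ihr (nodup_right hn) h

theorem card_clade_eq_length {t : RBT α} (hn : t.leafList.Nodup) :
    t.clade.card = t.leafList.length := by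
  simp [clade, List.toFinset_card_of_nodup hn]

theorem clade_disjoint {l r : RBT α} (hn : (node l r).leafList.Nodup) :
    Disjoint l.clade r.clade := by
  have := (List.nodup_append.mp hn).2.2
  rw [Finset.disjoint_left]
  intro a hal har
  simp only [clade, List.mem_toFinset] at hal har
  exact this a hal a har rfl

theorem node_not_mem_subtrees_left {l r : RBT α} : node l r ∉ l.subtrees := by
  intro h
  have := sizeOf_le_of_mem_subtrees h
  simp only [node.sizeOf_spec] at this
  omega

theorem node_not_mem_subtrees_right {l r : RBT α} : node l r ∉ r.subtrees := by
  intro h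
  have := sizeOf_le_of_mem_subtrees h
  simp only [node.sizeOf_spec] at this
  omega

theorem subtrees_disjoint {l r : RBT α} (hn : (node l r).leafList.Nodup) :
    Disjoint l.subtrees r.subtrees := by
  rw [Finset.disjoint_left]
  intro v hvl hvr
  have h1 : v.clade ⊆ l.clade := clade_subset_of_anc hvl
  have h2 : v.clade ⊆ r.clade := clade_subset_of_anc hvr
  rcases clade_nonempty v with ⟨a, ha⟩
  exact Finset.disjoint_left.mp (clade_disjoint hn) (h1 ha) (h2 ha)

theorem length_leafList_pos (t : RBT α) : 0 < t.leafList.length :=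
  List.length_pos_iff.mpr (leafList_ne_nil t)

theorem card_internals {t : RBT α} (hn : t.leafList.Nodup) :
    t.internals.card = t.leafList.length - 1 := by
  induction t with
  | leaf x =>
    rw [internals, subtrees, Finset.filter_singleton]
    simp [isInternal, leafList]
  | node l r ihl ihr =>
    have hdisj : Disjoint l.subtrees r.subtrees := subtrees_disjoint hn
    have hnl := nodup_left hn
    have hnr := nodup_right hn
    have : (node l r).internals = insert (node l r) (l.internals ∪ r.internals) := by
      simp only [internals, subtrees]
      rw [Finset.filter_insert, Finset.filter_union]
      simp [isInternal]
    rw [this]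
    have hni : node l r ∉ l.internals ∪ r.internals := by
      simp only [Finset.mem_union, internals, Finset.mem_filter]
      rintro (⟨h, _⟩ | ⟨h, _⟩)
      · exact node_not_mem_subtrees_left h
      · exact node_not_mem_subtrees_right h
    have hdisj2 : Disjoint l.internals r.internals :=
      hdisj.mono (Finset.filter_subset _ _) (Finset.filter_subset _ _)
    rw [Finset.card_insert_of_notMem hni, Finset.card_union_of_disjoint hdisj2,
      ihl hnl, ihr hnr]
    have h1 := length_leafList_pos l
    have h2 := length_leafList_pos r
    simp only [leafList, List.length_append]
    omega

theorem internals_subset_subtrees (t : RBT α) : t.internals ⊆ t.subtrees :=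
  Finset.filter_subset _ _

theorem internals_of_subtree {t v : RBT α} (hv : v ∈ t.subtrees) :
    v.internals = t.internals.filter (fun w => Anc v w) := by
  ext w
  simp only [internals, Finset.mem_filter]
  unfold Anc
  constructor
  · rintro ⟨hw, hint⟩
    exact ⟨⟨subtrees_subset hv hw, hint⟩, hw⟩
  · rintro ⟨⟨_, hint⟩, hw⟩
    exact ⟨hw, hint⟩

theorem card_clade_lt_of_strict_anc {t i j : RBT α} (hn : t.leafList.Nodup)
    (hi : i ∈ t.subtrees) (hij : Anc i j) (hne : j ≠ i) :
    j.clade.card < i.clade.card := by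
  have hni : i.leafList.Nodup := nodup_of_mem_subtrees hn hi
  have hnj : j.leafList.Nodup := nodup_of_mem_subtrees hni hij
  rw [card_clade_eq_length hni, card_clade_eq_length hnj]
  -- j is a strict subtree of i
  cases i with
  | leaf x => simp [Anc, subtrees] at hij; exact absurd hij hne
  | node l r =>
    rcases mem_subtrees_node.mp hij with h | h | h
    · exact absurd h hne
    · have h1 : j.leafList.length ≤ l.leafList.length := by
        have hs := leafList_subset_of_mem_subtrees h
        have := nodup_of_mem_subtrees (nodup_left hni) h
        calc j.leafList.length = j.clade.card := (card_clade_eq_length this).symm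
          _ ≤ l.clade.card := Finset.card_le_card (clade_subset_of_anc h)
          _ = l.leafList.length := card_clade_eq_length (nodup_left hni)
      have h2 := length_leafList_pos r
      simp only [leafList, List.length_append]
      omega
    · have h1 : j.leafList.length ≤ r.leafList.length := by
        have := nodup_of_mem_subtrees (nodup_right hni) h
        calc j.leafList.length = j.clade.card := (card_clade_eq_length this).symm
          _ ≤ r.clade.card := Finset.card_le_card (clade_subset_of_anc h)
          _ = r.leafList.length := card_clade_eq_length (nodup_right hni)
      have h2 := length_leafList_pos l
      simp only [leafList, List.length_append]
      omega

theorem clade_card_ge_two_of_internal {t v : RBT α} (hn : t.leafList.Nodup)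
    (hv : v ∈ t.internals) : 2 ≤ v.clade.card := by
  simp only [internals, Finset.mem_filter] at hv
  obtain ⟨hvs, hint⟩ := hv
  cases v with
  | leaf x => simp [isInternal] at hint
  | node l r =>
    have hnv := nodup_of_mem_subtrees hn hvs
    rw [card_clade_eq_length hnv]
    have h1 := length_leafList_pos l
    have h2 := length_leafList_pos r
    simp only [leafList, List.length_append]
    omega

theorem card_filter_subtype {β : Type} [DecidableEq β] (s : Finset β) (p : β → Prop)
    [DecidablePred p] :
    (Finset.univ.filter (fun w : ↥s => p ↑w)).card = (s.filter p).card := by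
  refine Finset.card_bij (fun (w : ↥s) (_ : w ∈ Finset.univ.filter (fun w : ↥s => p ↑w)) => (w : β)) ?_ ?_ ?_
  · intro a ha
    simp only [Finset.mem_filter, Finset.mem_univ, true_and] at ha
    exact Finset.mem_filter.mpr ⟨a.2, ha⟩
  · intro a _ b _ hab
    exact Subtype.ext hab
  · intro b hb
    simp only [Finset.mem_filter] at hb
    exact ⟨⟨b, hb.1⟩, by simp [hb.2], rfl⟩

theorem exists_greedy (ψ : RBT α) [Nonempty ↥ψ.internals] (m : ℕ)
    (A : ℕ → Finset ↥ψ.internals)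
    (hbig : ∀ k < m, k + 1 ≤ (A k).card)
    (hdc : ∀ k < m, ∀ w' ∈ A k, ∀ w : ↥ψ.internals, Anc (w' : RBT α) ↑w → w ∈ A k) :
    ∃ f : ℕ → ↥ψ.internals,
      (∀ k < m, f k ∈ A k) ∧
      (∀ k < m, ∀ j < k, f j ≠ f k) ∧
      (∀ k < m, ∀ k' < m, Anc ((f k') : RBT α) ↑(f k) → k ≤ k') := by
  have main : ∀ N, N ≤ m → ∃ f : ℕ → ↥ψ.internals,
      (∀ k < N, f k ∈ A k) ∧
      (∀ k < N, ∀ j < k, f j ≠ f k) ∧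
      (∀ k < N, ∀ w ∈ A k, (∀ j < k, f j ≠ w) → w ≠ f k →
        ¬ Anc ((f k) : RBT α) ↑w) := by
    intro N
    induction N with
    | zero => exact fun _ => ⟨fun _ => Classical.arbitrary _, by omega, by omega, by omega⟩
    | succ N ih =>
      intro hNm
      obtain ⟨f, hf1, hf2, hf3⟩ := ih (by omega)
      have hcard : ((Finset.range N).image f).card ≤ N :=
        le_trans (Finset.card_image_le) (by simp)
      have hne : (A N \ (Finset.range N).image f).Nonempty := by
        rw [← Finset.card_pos]
        by_contra hc
        push_neg at hc
        have h0 : (A N \ (Finset.range N).image f).card = 0 := by omega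
        have hsub : A N ⊆ (Finset.range N).image f := by
          intro a ha
          by_contra hnu
          have : a ∈ A N \ (Finset.range N).image f := Finset.mem_sdiff.mpr ⟨ha, hnu⟩
          rw [Finset.card_eq_zero.mp h0] at this
          simp at this
        have := Finset.card_le_card hsub
        have := hbig N (by omega)
        omega
      obtain ⟨w₀, hw₀, hmin⟩ := Finset.exists_min_image (A N \ (Finset.range N).image f)
        (fun w => sizeOf (w : RBT α)) hne
      rw [Finset.mem_sdiff] at hw₀
      set g : ℕ → ↥ψ.internals := fun k => if k = N then w₀ else f k with hg
      have hgN : g N = w₀ := by simp [hg]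
      have hgj : ∀ j, j ≠ N → g j = f j := fun j hj => by simp [hg, hj]
      refine ⟨g, ?_, ?_, ?_⟩
      · intro k hk
        by_cases hkN : k = N
        · rw [hkN, hgN]; exact hw₀.1
        · rw [hgj k hkN]; exact hf1 k (by omega)
      · intro k hk j hj
        by_cases hkN : k = N
        · rw [hkN, hgN, hgj j (by omega)]
          intro hEq
          exact hw₀.2 (Finset.mem_image.mpr ⟨j, Finset.mem_range.mpr (by omega), hEq⟩)
        · rw [hgj k hkN, hgj j (by omega)]
          exact hf2 k (by omega) j hj
      · intro k hk w hw havail hneq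
        by_cases hkN : k = N
        · rw [hkN, hgN] at hneq ⊢
          intro hanc
          have hwmem : w ∈ A N \ (Finset.range N).image f := by
            rw [Finset.mem_sdiff]
            refine ⟨by rw [hkN] at hw; exact hw, ?_⟩
            intro hmem
            obtain ⟨j, hj, hje⟩ := Finset.mem_image.mp hmem
            rw [Finset.mem_range] at hj
            refine havail j (by omega) ?_
            rw [hgj j (by omega)]; exact hje
          have h1 := hmin w hwmem
          have h2 : sizeOf (w : RBT α) < sizeOf (w₀ : RBT α) :=
            sizeOf_lt_of_mem_subtrees_ne hanc (fun h => hneq (Subtype.ext h))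
          omega
        · rw [hgj k hkN] at hneq ⊢
          refine hf3 k (by omega) w hw ?_ hneq
          intro j hj
          have := havail j (by omega)
          rwa [hgj j (by omega)] at this
  obtain ⟨f, hf1, hf2, hf3⟩ := main m le_rfl
  refine ⟨f, hf1, hf2, ?_⟩
  intro k hk k' hk' hanc
  by_contra hlt
  push_neg at hlt
  have hwA : f k ∈ A k' := hdc k' hk' (f k') (hf1 k' hk') (f k) hanc
  have havail : ∀ j < k', f j ≠ f k := fun j hj => hf2 k hk j (by omega)
  have hneq : f k ≠ f k' := fun h => hf2 k hk k' hlt h.symm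
  exact hf3 k' hk' (f k) hwA havail hneq hanc

section Caterpillar

variable {ψ T : RBT α}

/-- The "belowRel" relation on internal nodes of the gene tree. -/
def belowRel (T : RBT α) (a b : ↥T.internals) : Prop := Anc (b : RBT α) ↑a

instance : DecidableRel (belowRel T) := fun a b => inferInstanceAs (Decidable (Anc _ _))

theorem belowRel_trans' : ∀ {a b c : ↥T.internals}, belowRel T a b → belowRel T b c → belowRel T a c :=
  fun hab hbc => anc_trans hbc hab

theorem belowRel_antisymm' : ∀ {a b : ↥T.internals}, belowRel T a b → belowRel T b a → a = b :=
  fun h1 h2 => Subtype.ext (anc_antisymm h2 h1)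

theorem belowRel_total (hcat : T.IsCaterpillar) (a b : ↥T.internals) :
    belowRel T a b ∨ belowRel T b a := by
  rcases hcat ↑a a.2 ↑b b.2 with h | h
  · exact Or.inr h
  · exact Or.inl h

theorem multiset_map_count (h : ↥T.internals → ↥ψ.internals) (i : ↥ψ.internals) :
    Multiset.count i (Multiset.map h Finset.univ.val) = Phi ψ T h i := by
  rw [Multiset.count_map]
  have h1 : Phi ψ T h i = Multiset.card (Multiset.filter (fun j => h j = i) Finset.univ.val) := rfl
  rw [h1]
  congr 1
  exact Multiset.filter_congr (fun x _ => eq_comm)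

theorem phi_injOn (hcat : T.IsCaterpillar) :
    ∀ h ∈ coalHistories ψ T, ∀ h2 ∈ coalHistories ψ T,
      Phi ψ T h = Phi ψ T h2 → h = h2 := by
  intro h hh h2 hh2 hphi
  haveI : IsTrans ↥T.internals (belowRel T) := ⟨fun _ _ _ => belowRel_trans'⟩
  haveI : IsAntisymm ↥T.internals (belowRel T) := ⟨fun _ _ => belowRel_antisymm'⟩
  haveI : IsTotal ↥T.internals (belowRel T) := ⟨belowRel_total hcat⟩
  set r' : ↥ψ.internals → ↥ψ.internals → Prop := fun a b => Anc (b : RBT α) ↑a with hr'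
  haveI : IsAntisymm ↥ψ.internals r' := ⟨fun _ _ h1 h2 => Subtype.ext (anc_antisymm h2 h1)⟩
  set L : List ↥T.internals := Finset.univ.sort (belowRel T) with hL
  have hsortL : List.Pairwise (belowRel T) L := Finset.pairwise_sort _ _
  have hsorted : ∀ g ∈ coalHistories ψ T, List.Pairwise r' (L.map g) := by
    intro g hg
    exact List.Pairwise.map g (fun a b hab => hg.2 b a hab) hsortL
  have hmul : ∀ g : ↥T.internals → ↥ψ.internals,
      ((L.map g : List _) : Multiset _) = Multiset.map g Finset.univ.val := by
    intro g
    rw [← Multiset.map_coe]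
    congr 1
    exact Multiset.sort_eq _ _
  have hperm : List.Perm (L.map h) (L.map h2) := by
    rw [← Multiset.coe_eq_coe, hmul, hmul]
    ext i
    rw [multiset_map_count, multiset_map_count, hphi]
  have heq : L.map h = L.map h2 :=
    List.Perm.eq_of_pairwise' (hsorted h hh) (hsorted h2 hh2) hperm
  funext v
  have hv : v ∈ L := (Finset.mem_sort _).mpr (Finset.mem_univ v)
  exact List.map_eq_map_iff.mp heq v hv

end Caterpillar

theorem length_leafList_of_treeOn {t : RBT α} {X : Finset α} (ht : t.IsTreeOn X) :
    t.leafList.length = X.card := by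
  rw [← ht.2, card_clade_eq_length ht.1]

theorem exists_matching_history
    (X : Finset α) (n : ℕ) (hn : X.card = n) (hn2 : 2 ≤ n)
    (ψ T : RBT α) (hψ : ψ.IsTreeOn X) (hT : T.IsTreeOn X)
    (hcat : T.IsCaterpillar) (hne : T.cladeSet ≠ ψ.cladeSet)
    (h : ↥T.internals → ↥ψ.internals) (hh : h ∈ coalHistories ψ T) :
    ∃ h' ∈ coalHistories ψ ψ, Phi ψ ψ h' = Phi ψ T h ∧ h' ≠ id := by
  obtain ⟨hh1, hh2⟩ := hh
  set m : ℕ := n - 1 with hm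
  -- cardinalities
  have hlenT : T.leafList.length = n := by rw [length_leafList_of_treeOn hT, hn]
  have hlenψ : ψ.leafList.length = n := by rw [length_leafList_of_treeOn hψ, hn]
  have hcardT : T.internals.card = m := by rw [card_internals hT.1, hlenT]
  have hcardψ : ψ.internals.card = m := by rw [card_internals hψ.1, hlenψ]
  have hfcT : Fintype.card ↥T.internals = m := by rw [Fintype.card_coe, hcardT]
  have hfcψ : Fintype.card ↥ψ.internals = m := by rw [Fintype.card_coe, hcardψ]
  have hm1 : 1 ≤ m := by omega
  haveI hneT : Nonempty ↥T.internals := by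
    rw [← Fintype.card_pos_iff, hfcT]; omega
  haveI hneψ : Nonempty ↥ψ.internals := by
    rw [← Fintype.card_pos_iff, hfcψ]; omega
  -- the caterpillar chain
  haveI : IsTrans ↥T.internals (belowRel T) := ⟨fun _ _ _ => belowRel_trans'⟩
  haveI : IsAntisymm ↥T.internals (belowRel T) := ⟨fun _ _ => belowRel_antisymm'⟩
  haveI : IsTotal ↥T.internals (belowRel T) := ⟨belowRel_total hcat⟩
  haveI : IsRefl ↥T.internals (belowRel T) := ⟨fun a => anc_refl _⟩
  set L : List ↥T.internals := Finset.sort Finset.univ (belowRel T) with hL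
  have hsortL : List.Pairwise (belowRel T) L := Finset.pairwise_sort _ _
  have hnodupL : L.Nodup := Finset.sort_nodup _ _
  have hlenL : L.length = m := by
    rw [hL, Finset.length_sort, Finset.card_univ, hfcT]
  set e : ℕ → ↥T.internals := fun k => L.getD k (Classical.arbitrary _) with he
  have hek : ∀ k (hk : k < m), e k = L.get ⟨k, by omega⟩ := by
    intro k hk
    rw [he]
    exact List.getD_eq_get _ _ ⟨k, by omega⟩
  have hchain : ∀ k k', k ≤ k' → k' < m → belowRel T (e k) (e k') := by
    intro k k' hkk hk'
    rw [hek k (by omega), hek k' hk']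
    exact hsortL.rel_get_of_le (by simpa using hkk)
  have hesurj : ∀ w : ↥T.internals, ∃ k, k < m ∧ e k = w := by
    intro w
    have hw : w ∈ L := (Finset.mem_sort _).mpr (Finset.mem_univ w)
    obtain ⟨k, hk⟩ := List.mem_iff_get.mp hw
    exact ⟨k.val, by omega, by rw [hek k.val (by omega)]; simpa using hk⟩
  have heinj : ∀ k k', k < m → k' < m → e k = e k' → k = k' := by
    intro k k' hk hk' hkk
    rw [hek k hk, hek k' hk'] at hkk
    have := List.nodup_iff_injective_get.mp hnodupL hkk
    simpa using congrArg Fin.val this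
  -- positions: the set of internal nodes below the k-th chain element
  have hposcard : ∀ k, k < m →
      (Finset.univ.filter fun w : ↥T.internals => Anc ((e k) : RBT α) ↑w).card = k + 1 := by
    intro k hk
    have himg : (Finset.univ.filter fun w : ↥T.internals => Anc ((e k) : RBT α) ↑w)
        = (Finset.range (k+1)).image e := by
      ext w
      simp only [Finset.mem_filter, Finset.mem_univ, true_and, Finset.mem_image,
        Finset.mem_range]
      constructor
      · intro hanc
        obtain ⟨j, hj, hje⟩ := hesurj w
        refine ⟨j, ?_, hje⟩
        by_contra hjk
        push_neg at hjk
        have h1 : belowRel T (e k) (e j) := hchain k j (by omega) hj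
        have h2 : belowRel T (e j) (e k) := by rw [hje]; exact hanc
        have := belowRel_antisymm' h1 h2
        have := heinj k j hk hj this
        omega
      · rintro ⟨j, hj, hje⟩
        rw [← hje]
        exact hchain j k (by omega) hk
    rw [himg, Finset.card_image_of_injOn, Finset.card_range]
    intro a ha b hb hab
    simp only [Finset.coe_range, Set.mem_Iio] at ha hb
    exact heinj a b (by omega) (by omega) hab
  -- clade cards along the chain
  have hcladeE : ∀ k, k < m → ((e k : RBT α)).clade.card = k + 2 := by
    intro k hk
    have hsub : ((e k : RBT α)) ∈ T.subtrees :=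
      internals_subset_subtrees T ((e k).2)
    have hnod : ((e k : RBT α)).leafList.Nodup := nodup_of_mem_subtrees hT.1 hsub
    have hint : ((e k : RBT α)).internals.card = k + 1 := by
      rw [internals_of_subtree hsub, ← card_filter_subtype, hposcard k hk]
    have hlen : ((e k : RBT α)).leafList.length - 1 = k + 1 := by
      rw [← card_internals hnod, hint]
    have hpos := length_leafList_pos ((e k : RBT α))
    rw [card_clade_eq_length hnod]
    omega
  -- the sets A k of internal nodes of ψ below h (e k)
  set A : ℕ → Finset ↥ψ.internals :=
    fun k => Finset.univ.filter fun w : ↥ψ.internals => Anc ((h (e k)) : RBT α) ↑w with hA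
  have hAcard : ∀ k, k < m → (A k).card = ((h (e k) : RBT α)).clade.card - 1 := by
    intro k hk
    have hsub : ((h (e k) : RBT α)) ∈ ψ.subtrees :=
      internals_subset_subtrees ψ ((h (e k)).2)
    have hnod := nodup_of_mem_subtrees hψ.1 hsub
    rw [hA]
    calc (Finset.univ.filter fun w : ↥ψ.internals => Anc ((h (e k)) : RBT α) ↑w).card
        = (ψ.internals.filter fun w => Anc ((h (e k)) : RBT α) w).card :=
          card_filter_subtype _ _
      _ = ((h (e k) : RBT α)).internals.card := by rw [← internals_of_subtree hsub]
      _ = ((h (e k) : RBT α)).leafList.length - 1 := card_internals hnod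
      _ = ((h (e k) : RBT α)).clade.card - 1 := by rw [card_clade_eq_length hnod]
  have hbig : ∀ k, k < m → k + 1 ≤ (A k).card := by
    intro k hk
    rw [hAcard k hk]
    have h1 : ((e k : RBT α)).clade.card ≤ ((h (e k) : RBT α)).clade.card :=
      Finset.card_le_card (hh1 (e k))
    rw [hcladeE k hk] at h1
    omega
  have hdc : ∀ k, k < m → ∀ w' ∈ A k, ∀ w : ↥ψ.internals, Anc (w' : RBT α) ↑w → w ∈ A k := by
    intro k hk w' hw' w hanc
    rw [hA] at hw' ⊢
    simp only [Finset.mem_filter, Finset.mem_univ, true_and] at hw' ⊢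
    exact anc_trans hw' hanc
  -- greedy bijection
  obtain ⟨f, hf1, hf2, hf3⟩ := exists_greedy ψ m A (fun k hk => hbig k hk)
    (fun k hk => hdc k hk)
  have hfA : ∀ k, k < m → Anc ((h (e k)) : RBT α) ↑(f k) := by
    intro k hk
    have := hf1 k hk
    rw [hA] at this
    simpa using this
  set fF : Fin m → ↥ψ.internals := fun k => f k.val with hfF
  have hfFinj : Function.Injective fF := by
    intro a b hab
    by_contra hne'
    rcases Nat.lt_or_ge a.val b.val with hlt | hge
    · exact hf2 b.val b.isLt a.val hlt hab
    · have : b.val < a.val := by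
        rcases Nat.lt_or_ge b.val a.val with h | h
        · exact h
        · exact absurd (Fin.ext (by omega)) hne'
      exact hf2 a.val a.isLt b.val this hab.symm
  have hfFbij : Function.Bijective fF :=
    (Fintype.bijective_iff_injective_and_card fF).mpr ⟨hfFinj, by simp [hfcψ]⟩
  set gE : ↥ψ.internals ≃ Fin m := (Equiv.ofBijective fF hfFbij).symm with hgE
  have hfg : ∀ v : ↥ψ.internals, fF (gE v) = v := fun v =>
    (Equiv.ofBijective fF hfFbij).apply_symm_apply v
  have hgf : ∀ k : Fin m, gE (fF k) = k := fun k =>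
    (Equiv.ofBijective fF hfFbij).symm_apply_apply k
  -- the matching history
  set h' : ↥ψ.internals → ↥ψ.internals := fun v => h (e (gE v).val) with hh'
  have hanc' : ∀ v : ↥ψ.internals, Anc ((h' v) : RBT α) ↑v := by
    intro v
    have := hfA (gE v).val (gE v).isLt
    rw [show f (gE v).val = v from hfg v] at this
    exact this
  have hmono' : ∀ v w : ↥ψ.internals, Anc (v : RBT α) ↑w →
      Anc ((h' v) : RBT α) ↑(h' w) := by
    intro v w hanc
    have hvw : Anc ((f (gE v).val) : RBT α) ↑(f (gE w).val) := by
      rw [show f (gE v).val = v from hfg v, show f (gE w).val = w from hfg w]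
      exact hanc
    have hkk : (gE w).val ≤ (gE v).val :=
      hf3 (gE w).val (gE w).isLt (gE v).val (gE v).isLt hvw
    have hbel : belowRel T (e (gE w).val) (e (gE v).val) :=
      hchain (gE w).val (gE v).val hkk (gE v).isLt
    exact hh2 _ _ hbel
  have hhist' : h' ∈ coalHistories ψ ψ := by
    refine ⟨fun v => clade_subset_of_anc (hanc' v), hmono'⟩
  -- Phi equality
  have hphi : Phi ψ ψ h' = Phi ψ T h := by
    funext i
    rw [Phi, Phi]
    apply Finset.card_bij (fun (v : ↥ψ.internals) _ => e (gE v).val)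
    · intro v hv
      simp only [Finset.mem_filter, Finset.mem_univ, true_and] at hv ⊢
      exact hv
    · intro a ha b hb hab
      have : (gE a).val = (gE b).val :=
        heinj _ _ (gE a).isLt (gE b).isLt hab
      have : gE a = gE b := Fin.ext this
      calc a = fF (gE a) := (hfg a).symm
        _ = fF (gE b) := by rw [this]
        _ = b := hfg b
    · intro j hj
      simp only [Finset.mem_filter, Finset.mem_univ, true_and] at hj
      obtain ⟨k, hk, hke⟩ := hesurj j
      refine ⟨fF ⟨k, hk⟩, ?_, ?_⟩
      · simp only [Finset.mem_filter, Finset.mem_univ, true_and]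
        rw [hh']
        simp only [hgf ⟨k, hk⟩]
        rw [hke]
        exact hj
      · simp only [hgf ⟨k, hk⟩]
        exact hke
  -- h' is not the identity
  have hid : h' ≠ id := by
    intro hideq
    -- the map τ : Fin m → ↥ψ.internals, k ↦ h (e k), is surjective
    have hτsurj : ∀ v : ↥ψ.internals, h (e (gE v).val) = v := by
      intro v
      have := congrFun hideq v
      exact this
    -- clade cards along the image chain
    set c : ℕ → ℕ := fun k => ((h (e k) : RBT α)).clade.card with hc
    have hclow : ∀ k, k < m → k + 2 ≤ c k := by
      intro k hk
      have h1 : ((e k : RBT α)).clade.card ≤ c k := Finset.card_le_card (hh1 (e k))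
      rw [hcladeE k hk] at h1
      exact h1
    have hτinj : ∀ k k', k < m → k' < m → h (e k) = h (e k') → k = k' := by
      intro k k' hk hk' hkk
      -- use surjectivity/bijectivity: τ = fun k => h (e k) is injective since surjective
      have hsurj : Function.Surjective (fun k : Fin m => h (e k.val)) := by
        intro v
        exact ⟨gE v, hτsurj v⟩
      have hinj : Function.Injective (fun k : Fin m => h (e k.val)) :=
        (Fintype.bijective_iff_surjective_and_card _).mpr
          ⟨hsurj, by simp [hfcψ]⟩ |>.1
      have := hinj (a₁ := ⟨k, hk⟩) (a₂ := ⟨k', hk'⟩) hkk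
      simpa using congrArg Fin.val this
    have hstrict : ∀ k k', k < k' → k' < m → c k < c k' := by
      intro k k' hkk hk'
      have hbel : belowRel T (e k) (e k') := hchain k k' (by omega) hk'
      have hancψ : Anc ((h (e k')) : RBT α) ↑(h (e k)) := hh2 _ _ hbel
      have hneq : ((h (e k)) : RBT α) ≠ ↑(h (e k')) := by
        intro hcon
        have := hτinj k k' (by omega) hk' (Subtype.ext hcon)
        omega
      exact card_clade_lt_of_strict_anc hψ.1
        (internals_subset_subtrees ψ (h (e k')).2) hancψ hneq
    have haccum : ∀ j, j < m → ∀ k, k ≤ j → c k + (j - k) ≤ c j := by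
      intro j
      induction j with
      | zero => intro _ k hk; interval_cases k; simp
      | succ j ih =>
        intro hj k hk
        rcases Nat.eq_or_lt_of_le hk with hkj | hkj
        · subst hkj; simp
        · have h1 : c k + (j - k) ≤ c j := ih (by omega) k (by omega)
          have h2 : c j < c (j+1) := hstrict j (j+1) (by omega) hj
          omega
    have hcup : ∀ k, k < m → c k ≤ k + 2 := by
      intro k hk
      have h1 : c k + (m - 1 - k) ≤ c (m-1) := haccum (m-1) (by omega) k (by omega)
      have h2 : c (m-1) ≤ n := by
        rw [hc]
        calc ((h (e (m-1)) : RBT α)).clade.card ≤ ψ.clade.card :=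
          Finset.card_le_card (clade_subset_of_anc
            (by
              have := (h (e (m-1))).2
              simp only [internals, Finset.mem_filter] at this
              exact this.1))
        _ = n := by rw [hψ.2, hn]
      omega
    have hceq : ∀ k, k < m → ((h (e k) : RBT α)).clade = ((e k : RBT α)).clade := by
      intro k hk
      refine (Finset.eq_of_subset_of_card_le (hh1 (e k)) ?_).symm
      have := hcup k hk
      rw [hcladeE k hk]
      exact this
    -- conclude the clade sets are equal
    apply hne
    ext S
    simp only [cladeSet, Set.mem_setOf_eq]
    constructor
    · rintro ⟨v, hv, rfl⟩
      cases v with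
      | leaf x =>
        have hx : x ∈ T.clade := mem_clade_iff_leaf_mem.mpr hv
        rw [hT.2, ← hψ.2] at hx
        exact ⟨leaf x, mem_clade_iff_leaf_mem.mp hx, rfl⟩
      | node l r =>
        have hvi : node l r ∈ T.internals := by
          simp only [internals, Finset.mem_filter]
          exact ⟨hv, rfl⟩
        obtain ⟨k, hk, hke⟩ := hesurj ⟨node l r, hvi⟩
        refine ⟨((h (e k)) : RBT α), internals_subset_subtrees ψ (h (e k)).2, ?_⟩
        rw [hceq k hk, hke]
    · rintro ⟨v, hv, rfl⟩
      cases v with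
      | leaf x =>
        have hx : x ∈ ψ.clade := mem_clade_iff_leaf_mem.mpr hv
        rw [hψ.2, ← hT.2] at hx
        exact ⟨leaf x, mem_clade_iff_leaf_mem.mp hx, rfl⟩
      | node l r =>
        have hvi : node l r ∈ ψ.internals := by
          simp only [internals, Finset.mem_filter]
          exact ⟨hv, rfl⟩
        have := hτsurj ⟨node l r, hvi⟩
        refine ⟨((e (gE ⟨node l r, hvi⟩).val) : RBT α),
          internals_subset_subtrees T (e _).2, ?_⟩
        rw [← hceq (gE ⟨node l r, hvi⟩).val (gE ⟨node l r, hvi⟩).isLt, this]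
  exact ⟨h', hhist', hphi, hid⟩

end RBT

/-- If `ψ` is a species tree topology on `X` with `|X| = n ≥ 2`
and `T` is a caterpillar gene tree on `X` not having the same set of clades as
`ψ`, then `|H_{ψ,T}| < |H_{ψ,T_M}|`, where the matching gene tree `T_M` is `ψ`
itself regarded as a gene tree. -/
theorem caterpillar_fewer_coalHistories_than_matching
    {α : Type} [DecidableEq α] (X : Finset α) (n : ℕ)
    (hn : X.card = n) (h2 : 2 ≤ n)
    (ψ T : RBT α) (hψ : ψ.IsTreeOn X) (hT : T.IsTreeOn X)
    (hcat : T.IsCaterpillar) (hne : T.cladeSet ≠ ψ.cladeSet) :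
    (RBT.coalHistories ψ T).ncard < (RBT.coalHistories ψ ψ).ncard := by
  classical
  have key : ∀ h ∈ RBT.coalHistories ψ T,
      ∃ h' , h' ∈ RBT.coalHistories ψ ψ ∧ RBT.Phi ψ ψ h' = RBT.Phi ψ T h ∧ h' ≠ id := by
    intro h hh
    obtain ⟨h', h1, h2', h3⟩ := RBT.exists_matching_history X n hn h2 ψ T hψ hT hcat hne h hh
    exact ⟨h', h1, h2', h3⟩
  set F : (↥T.internals → ↥ψ.internals) → (↥ψ.internals → ↥ψ.internals) :=
    fun h => if hh : h ∈ RBT.coalHistories ψ T then Classical.choose (key h hh) else id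
    with hF
  have hF1 : ∀ h (hh : h ∈ RBT.coalHistories ψ T), F h ∈ RBT.coalHistories ψ ψ ∧
      RBT.Phi ψ ψ (F h) = RBT.Phi ψ T h ∧ F h ≠ id := by
    intro h hh
    rw [hF]
    simp only [dif_pos hh]
    exact Classical.choose_spec (key h hh)
  have hinj : Set.InjOn F (RBT.coalHistories ψ T) := by
    intro a ha b hb hab
    have h1 := (hF1 a ha).2.1
    have h2' := (hF1 b hb).2.1
    have : RBT.Phi ψ T a = RBT.Phi ψ T b := by
      rw [← h1, ← h2', hab]
    exact RBT.phi_injOn hcat a ha b hb this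
  have hidM : (id : ↥ψ.internals → ↥ψ.internals) ∈ RBT.coalHistories ψ ψ :=
    ⟨fun j => subset_rfl, fun i j hij => hij⟩
  have hsub : F '' (RBT.coalHistories ψ T) ⊆ RBT.coalHistories ψ ψ \ {id} := by
    rintro _ ⟨h, hh, rfl⟩
    exact ⟨(hF1 h hh).1, (hF1 h hh).2.2⟩
  have hfin : (RBT.coalHistories ψ ψ).Finite := Set.toFinite _
  calc (RBT.coalHistories ψ T).ncard
      = (F '' (RBT.coalHistories ψ T)).ncard := (Set.ncard_image_of_injOn hinj).symm
    _ ≤ (RBT.coalHistories ψ ψ \ {id}).ncard :=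
        Set.ncard_le_ncard hsub hfin.diff
    _ < (RBT.coalHistories ψ ψ).ncard :=
        Set.ncard_diff_singleton_lt_of_mem hidM hfin
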